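/- arXiv:1011.4305 — 2 statements merged into one kernel-verified Lean document; each statement's English description precedes it below -/
import Mathlib

section
/- Given graded coalgebras C and D, the compositional coproduct on D∘C = ⊕_{n≥0} D_n ⊗ C^{⊗(n+1)}, defined by Δ(c_0⊗⋯⊗c_n⊗d) = Σ_{i=0}^{n} Σ_{(d), |d'|=i} Σ_{(c_i)} (c_0⊗⋯⊗c_{i-1}⊗c_i'⊗d') ⊗ (c_i''⊗c_{i+1}⊗⋯⊗c_n⊗d''), is coassociative. -/
open TensorProduct

/-- A graded coalgebra with a distinguished (graded) basis `ι`, described by its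
structure constants: `Δ(b) = ∑_{(p₁,p₂)} delta b (p₁,p₂) • p₁ ⊗ p₂` and
`ε(b) = eps b`. -/
structure BasedGradedCoalgebra (K : Type) [Field K] where
  ι : Type
  deg : ι → ℕ
  delta : ι → ((ι × ι) →₀ K)
  eps : ι → K

namespace BasedGradedCoalgebra

variable {K : Type} [Field K]

/-- The underlying vector space of a based coalgebra. -/
abbrev space (C : BasedGradedCoalgebra K) : Type := C.ι →₀ K

/-- The coproduct of a based coalgebra, as a linear map. -/
noncomputable def comul (C : BasedGradedCoalgebra K) :
    C.space →ₗ[K] C.space ⊗[K] C.space :=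
  Finsupp.lift (C.space ⊗[K] C.space) K C.ι fun b =>
    (C.delta b).sum fun p k =>
      k • (Finsupp.single p.1 (1 : K) ⊗ₜ[K] Finsupp.single p.2 (1 : K))

/-- The counit of a based coalgebra, as a linear map. -/
noncomputable def counit (C : BasedGradedCoalgebra K) : C.space →ₗ[K] K :=
  Finsupp.lift K K C.ι C.eps

/-- The axioms making a `BasedGradedCoalgebra` an honest graded coassociative
counital coalgebra: coassociativity, the counit laws, and gradedness of `Δ` and `ε`. -/
def IsCoalgebra (C : BasedGradedCoalgebra K) : Prop :=
  (∀ x, (TensorProduct.assoc K C.space C.space C.space)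
      ((TensorProduct.map C.comul LinearMap.id) (C.comul x)) =
      (TensorProduct.map LinearMap.id C.comul) (C.comul x)) ∧
  (∀ x, (TensorProduct.lid K C.space)
      ((TensorProduct.map C.counit LinearMap.id) (C.comul x)) = x) ∧
  (∀ x, (TensorProduct.rid K C.space)
      ((TensorProduct.map LinearMap.id C.counit) (C.comul x)) = x) ∧
  (∀ b p, C.delta b p ≠ 0 → C.deg p.1 + C.deg p.2 = C.deg b) ∧
  (∀ b, C.eps b ≠ 0 → C.deg b = 0)

/-- The index set (basis) of the composition `D ∘ C = ⊕_n D_n ⊗ C^{⊗(n+1)}`: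
a basis element `d` of `D` of degree `n` together with `n+1` basis elements of `C`. -/
def compIdx (D C : BasedGradedCoalgebra K) : Type :=
  Σ d : D.ι, Fin (D.deg d + 1) → C.ι

/-- First part `(c₀, …, c_{m-1}, c)` of a split of the list of `C`-factors:
the first `m` entries of `cs` followed by `c`. -/
def front {A : Type} {n : ℕ} (m : ℕ) (cs : Fin (n + 1) → A) (c : A) :
    Fin (m + 1) → A :=
  fun j => if h : (j : ℕ) < m ∧ (j : ℕ) < n + 1 then cs ⟨j, h.2⟩ else c

/-- Second part `(c, c_{i+1}, …, c_n)` of a split of the list of `C`-factors: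
`c` followed by the entries of `cs` from position `i+1` on. -/
def back {A : Type} {n : ℕ} (i m : ℕ) (cs : Fin (n + 1) → A) (c : A) :
    Fin (m + 1) → A :=
  fun j => if h : 0 < (j : ℕ) ∧ i + (j : ℕ) < n + 1 then cs ⟨i + j, h.2⟩ else c

/-- The `i`-th index into the `C`-factors over `d` (with junk fallback). -/
def idx (D : BasedGradedCoalgebra K) (d : D.ι) (i : ℕ) : Fin (D.deg d + 1) :=
  if h : i < D.deg d + 1 then ⟨i, h⟩ else 0

/-- The compositional coproduct on `D ∘ C`:
`Δ(c₀ ⊗ ⋯ ⊗ c_n ⊗ d) = ∑_{i=0}^{n} ∑_{(d), |d'| = i} ∑_{(c_i)}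
  (c₀ ⊗ ⋯ ⊗ c_{i-1} ⊗ c_i' ⊗ d') ⊗ (c_i'' ⊗ c_{i+1} ⊗ ⋯ ⊗ c_n ⊗ d'')`. -/
noncomputable def compComul (D C : BasedGradedCoalgebra K) :
    (compIdx D C →₀ K) →ₗ[K] (compIdx D C →₀ K) ⊗[K] (compIdx D C →₀ K) :=
  Finsupp.lift ((compIdx D C →₀ K) ⊗[K] (compIdx D C →₀ K)) K (compIdx D C) fun e =>
    ∑ q ∈ (D.delta e.1).support,
      ∑ r ∈ (C.delta (e.2 (idx D e.1 (D.deg q.1)))).support,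
        (D.delta e.1 q * C.delta (e.2 (idx D e.1 (D.deg q.1))) r) •
          (Finsupp.single (⟨q.1, front (D.deg q.1) e.2 r.1⟩ : compIdx D C) (1 : K) ⊗ₜ[K]
            Finsupp.single (⟨q.2, back (D.deg q.1) (D.deg q.2) e.2 r.2⟩ : compIdx D C)
              (1 : K))

end BasedGradedCoalgebra

open BasedGradedCoalgebra

/-!
On basis vectors, coassociativity is an identity between structure constants
(`coeffComul_coassoc_iff`). Fix a basis vector `(d, cs)` of `D ∘ C` and a target
`(da, fa) ⊗ (db, fb) ⊗ (dc, fc)`. By gradedness of `D`, every contributing term of either iterated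
coproduct cuts `cs` at the positions `|da|` and `|da| + |db|`. Each side is therefore the
`da ⊗ db ⊗ dc`-coefficient of the matching iterated coproduct of `d`, times a weight that depends
only on `C` and on these two positions; coassociativity of `D` matches the `D`-parts, and both
vanish unless `|da| + |db| + |dc| = |d|`. If `|db| > 0`, the two cuts fall in the different
factors `c_{|da|}` and `c_{|da|+|db|}`, and both weights are the same product of two coefficients
of `Δ_C`. If `|db| = 0`, the factor `c_{|da|}` is cut twice, and the two weights are the two sides
of coassociativity of `C`.
-/

open Finsupp

lemma Sigma.mk_apply_eq_mk_iff {α : Type*} {β : α → Type*} (F : ∀ x, β x) {x y : α} {g : β y} :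
    (⟨x, F x⟩ : Sigma β) = ⟨y, g⟩ ↔ x = y ∧ F y = g := by
  refine Sigma.mk.inj_iff.trans ⟨fun ⟨hxy, h⟩ => ?_, fun ⟨hxy, h⟩ => ?_⟩ <;> subst hxy
  · exact ⟨rfl, eq_of_heq h⟩
  · exact ⟨rfl, heq_of_eq h⟩

section StructureConstants

variable {R ι : Type*} [CommSemiring R]

lemma Finsupp.sum_mul_ite_eq {α : Type*} [DecidableEq α] (f : α →₀ R) (a : α) (g : α → R) :
    (f.sum fun x k => k * if x = a then g x else 0) = f a * g a := by
  by_cases ha : a ∈ f.support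
  · simp [mul_ite, ha]
  · simp [mul_ite, ha, notMem_support_iff.mp ha]

noncomputable def coeffComul (δ : ι → (ι × ι →₀ R)) : (ι →₀ R) →ₗ[R] (ι →₀ R) ⊗[R] (ι →₀ R) :=
  Finsupp.lift _ R ι fun b => (δ b).sum fun p k => k • (single p.1 1 ⊗ₜ[R] single p.2 1)

lemma coeffComul_single (δ : ι → (ι × ι →₀ R)) (b : ι) :
    coeffComul δ (single b 1) = (δ b).sum fun p k => k • (single p.1 1 ⊗ₜ[R] single p.2 1) := by
  simp [coeffComul]

variable (R ι) in
noncomputable def tripleEquiv : (ι →₀ R) ⊗[R] ((ι →₀ R) ⊗[R] (ι →₀ R)) ≃ₗ[R] (ι × ι × ι →₀ R) :=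
  (TensorProduct.congr (LinearEquiv.refl R _) (finsuppTensorFinsupp' R ι ι)).trans
    (finsuppTensorFinsupp' R ι (ι × ι))

lemma tripleEquiv_tmul (a b c : ι) (x y z : R) :
    tripleEquiv R ι (single a x ⊗ₜ (single b y ⊗ₜ single c z)) =
      single (a, b, c) (x * (y * z)) := by
  rw [tripleEquiv, LinearEquiv.trans_apply, TensorProduct.congr_tmul, LinearEquiv.refl_apply,
    finsuppTensorFinsupp'_single_tmul_single, finsuppTensorFinsupp'_single_tmul_single]

variable [DecidableEq ι]

lemma tripleEquiv_assoc_map_coeffComul (δ : ι → (ι × ι →₀ R)) (b x y z : ι) :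
    tripleEquiv R ι (TensorProduct.assoc R _ _ _
      (TensorProduct.map (coeffComul δ) LinearMap.id (coeffComul δ (single b 1)))) (x, y, z) =
      (δ b).sum fun p k => k * if p.2 = z then δ p.1 (x, y) else 0 := by
  simp only [coeffComul_single, Finsupp.sum, map_sum, map_smul, TensorProduct.map_tmul,
    LinearMap.id_apply, TensorProduct.sum_tmul, ← TensorProduct.smul_tmul',
    TensorProduct.assoc_tmul, tripleEquiv_tmul, finsetSum_apply, Finsupp.smul_apply, single_apply,
    smul_eq_mul, mul_one]
  refine Finset.sum_congr rfl fun p _ => ?_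
  have key : ∀ i : ι × ι, (i.1, i.2, p.2) = (x, y, z) ↔ i = (x, y) ∧ p.2 = z := by
    simp [Prod.ext_iff, and_assoc]
  simp only [key]
  by_cases h : p.2 = z <;> simp +contextual [h]

lemma tripleEquiv_map_coeffComul (δ : ι → (ι × ι →₀ R)) (b x y z : ι) :
    tripleEquiv R ι (TensorProduct.map LinearMap.id (coeffComul δ) (coeffComul δ (single b 1)))
      (x, y, z) = (δ b).sum fun p k => k * if p.1 = x then δ p.2 (y, z) else 0 := by
  simp only [coeffComul_single, Finsupp.sum, map_sum, map_smul, TensorProduct.map_tmul,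
    LinearMap.id_apply, TensorProduct.tmul_sum, TensorProduct.tmul_smul, tripleEquiv_tmul,
    finsetSum_apply, Finsupp.smul_apply, single_apply, smul_eq_mul, mul_one]
  refine Finset.sum_congr rfl fun p _ => ?_
  have key : ∀ i : ι × ι, (p.1, i.1, i.2) = (x, y, z) ↔ p.1 = x ∧ i = (y, z) := by
    simp [Prod.ext_iff]
  simp only [key]
  by_cases h : p.1 = x <;> simp +contextual [h]

def IsCoassocCoeffs (δ : ι → (ι × ι →₀ R)) : Prop :=
  ∀ b x y z, ((δ b).sum fun p k => k * if p.2 = z then δ p.1 (x, y) else 0) =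
    (δ b).sum fun p k => k * if p.1 = x then δ p.2 (y, z) else 0

theorem coeffComul_coassoc_iff (δ : ι → (ι × ι →₀ R)) :
    (∀ v, TensorProduct.assoc R _ _ _
        (TensorProduct.map (coeffComul δ) LinearMap.id (coeffComul δ v)) =
      TensorProduct.map LinearMap.id (coeffComul δ) (coeffComul δ v)) ↔ IsCoassocCoeffs δ := by
  refine ⟨fun h b x y z => ?_, fun h => ?_⟩
  · rw [← tripleEquiv_assoc_map_coeffComul, ← tripleEquiv_map_coeffComul, h]
  · suffices (TensorProduct.assoc R _ _ _).toLinearMap ∘ₗ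
        TensorProduct.map (coeffComul δ) LinearMap.id ∘ₗ coeffComul δ =
        TensorProduct.map LinearMap.id (coeffComul δ) ∘ₗ coeffComul δ from
      fun v => LinearMap.congr_fun this v
    refine Finsupp.lhom_ext' fun b => LinearMap.ext_ring <| (tripleEquiv R ι).injective <|
      Finsupp.ext fun ⟨x, y, z⟩ => ?_
    simpa [tripleEquiv_assoc_map_coeffComul, tripleEquiv_map_coeffComul] using h b x y z

end StructureConstants

namespace BasedGradedCoalgebra

section Splitting

variable {A : Type} {n : ℕ} (cs : Fin (n + 1) → A)

/-- `cs i`, or `cs 0` when `i` is out of range. `cs (idx D d i)` unfolds to `entry cs i`, which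
frees the lemmas about cutting from `D`. -/
def entry (i : ℕ) : A := cs (if h : i < n + 1 then ⟨i, h⟩ else 0)

lemma entry_of_lt {i : ℕ} (h : i < n + 1) : entry cs i = cs ⟨i, h⟩ := by
  simp [entry, h]

lemma front_apply_last (m : ℕ) (c : A) : front m cs c (Fin.last m) = c := dif_neg (by simp)

lemma back_apply_zero (i m : ℕ) (c : A) : back i m cs c 0 = c := dif_neg (by simp)

lemma front_zero (c : A) : front 0 cs c = fun _ => c := by
  funext j; exact dif_neg (by omega)

lemma back_zero (i : ℕ) (c : A) : back i 0 cs c = fun _ => c := by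
  funext j; exact dif_neg (by omega)

lemma front_front {i m : ℕ} (x y : A) (hi : i ≤ m) (hm : m ≤ n) :
    front i (front m cs y) x = front i cs x := by
  funext j
  simp only [front]
  split_ifs <;> first | rfl | omega

lemma back_back {i j k m : ℕ} (x y : A) (hm : j + k ≤ m) (hn : i + j + k ≤ n) :
    back j k (back i m cs x) y = back (i + j) k cs y := by
  funext l
  simp only [back]
  split_ifs <;> first | omega | simp only [Nat.add_assoc]

lemma back_front {i j m : ℕ} (x y : A) (hj : 0 < j) (hm : j ≤ m) (hn : i + j ≤ n) :
    back i j (front (i + j) cs y) x = front j (back i m cs x) y := by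
  funext l
  simp only [front, back]
  split_ifs <;> first | rfl | omega

lemma entry_front_of_lt {i m : ℕ} (y : A) (hi : i < m) (hm : m ≤ n) :
    entry (front m cs y) i = entry cs i := by
  rw [entry_of_lt _ (by omega : i < m + 1), entry_of_lt _ (by omega : i < n + 1)]
  exact dif_pos ⟨hi, by simp only; omega⟩

lemma entry_front_self (m : ℕ) (y : A) : entry (front m cs y) m = y := by
  rw [entry_of_lt _ (by omega : m < m + 1)]
  exact dif_neg (by simp)

lemma entry_back_zero (i m : ℕ) (x : A) : entry (back i m cs x) 0 = x := by
  rw [entry_of_lt _ (by omega : 0 < m + 1)]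
  exact dif_neg (by simp)

lemma entry_back_of_pos {i j m : ℕ} (x : A) (hj : 0 < j) (hm : j ≤ m) (hn : i + j ≤ n) :
    entry (back i m cs x) j = entry cs (i + j) := by
  rw [entry_of_lt _ (by omega : j < m + 1), entry_of_lt _ (by omega : i + j < n + 1)]
  exact dif_pos ⟨hj, by simp only; omega⟩

lemma back_front_apply_last {i j : ℕ} (x y : A) (hj : 0 < j) :
    back i j (front (i + j) cs y) x (Fin.last j) = y := by
  rw [back, dif_pos ⟨by simpa, by simp⟩]
  exact dif_neg (by simp)

lemma eq_last_of_front_eq {m : ℕ} {x : A} {f : Fin (m + 1) → A} (h : front m cs x = f) :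
    x = f (Fin.last m) := by
  rw [← h, front_apply_last]

lemma eq_zero_of_back_eq {i m : ℕ} {x : A} {f : Fin (m + 1) → A} (h : back i m cs x = f) :
    x = f 0 := by
  rw [← h, back_apply_zero]

lemma const_eq_of_fin_one (f : Fin 1 → A) (a : Fin 1) : (fun _ => f a) = f :=
  funext fun j => congrArg f (Subsingleton.elim a j)

/-- `fa`, `fb`, `fc` arise from `cs` by cutting the factors at positions `i` and `i + j`. -/
def IsSplit (i j k : ℕ) (fa : Fin (i + 1) → A) (fb : Fin (j + 1) → A) (fc : Fin (k + 1) → A) :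
    Prop :=
  front i cs (fa (Fin.last i)) = fa ∧ back i j (front (i + j) cs (fb (Fin.last j))) (fb 0) = fb ∧
    back (i + j) k cs (fc 0) = fc

lemma isSplit_zero_iff {i k : ℕ} (fa : Fin (i + 1) → A) (fb : Fin (0 + 1) → A)
    (fc : Fin (k + 1) → A) :
    IsSplit cs i 0 k fa fb fc ↔ front i cs (fa (Fin.last i)) = fa ∧ back i k cs (fc 0) = fc := by
  rw [IsSplit, back_zero, const_eq_of_fin_one]
  exact and_congr_right fun _ => and_iff_right rfl

end Splitting

variable {K : Type} [Field K] (D C : BasedGradedCoalgebra K)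

open Classical in
/-- The `C`-part of the coefficient of `(da, fa) ⊗ (db, fb) ⊗ (dc, fc)` in `(Δ ⊗ id) Δ (d, cs)`
coming from the terms of `Δ_D d` whose left factor has degree `m`, where `i, j, k` are the
degrees of `da, db, dc`. -/
noncomputable def leftWeight {n : ℕ} (cs : Fin (n + 1) → C.ι) (m k i j : ℕ)
    (fa : Fin (i + 1) → C.ι) (fb : Fin (j + 1) → C.ι) (fc : Fin (k + 1) → C.ι) : K :=
  (C.delta (entry cs m)).sum fun r t => t *
    if back m k cs r.2 = fc ∧ front i (front m cs r.1) (fa (Fin.last i)) = fa ∧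
        back i j (front m cs r.1) (fb 0) = fb then
      C.delta (entry (front m cs r.1) i) (fa (Fin.last i), fb 0)
    else 0

open Classical in
/-- The `C`-part of the coefficient of `(da, fa) ⊗ (db, fb) ⊗ (dc, fc)` in `(id ⊗ Δ) Δ (d, cs)`
coming from the terms of `Δ_D d` whose right factor has degree `m`. -/
noncomputable def rightWeight {n : ℕ} (cs : Fin (n + 1) → C.ι) (m i j k : ℕ)
    (fa : Fin (i + 1) → C.ι) (fb : Fin (j + 1) → C.ι) (fc : Fin (k + 1) → C.ι) : K :=
  (C.delta (entry cs i)).sum fun r t => t *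
    if front i cs r.1 = fa ∧ front j (back i m cs r.2) (fb (Fin.last j)) = fb ∧
        back j k (back i m cs r.2) (fc 0) = fc then
      C.delta (entry (back i m cs r.2) j) (fb (Fin.last j), fc 0)
    else 0

section Weights

variable {n i k : ℕ} (cs : Fin (n + 1) → C.ι) (fa : Fin (i + 1) → C.ι) (fc : Fin (k + 1) → C.ι)

open Classical in
lemma leftWeight_of_pos {j : ℕ} (fb : Fin (j + 1) → C.ι) (hj : 0 < j) (hn : i + j ≤ n) :
    leftWeight C cs (i + j) k i j fa fb fc = if IsSplit cs i j k fa fb fc then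
      C.delta (entry cs i) (fa (Fin.last i), fb 0) *
        C.delta (entry cs (i + j)) (fb (Fin.last j), fc 0) else 0 := by
  have key : ∀ r : C.ι × C.ι, (back (i + j) k cs r.2 = fc ∧
      front i (front (i + j) cs r.1) (fa (Fin.last i)) = fa ∧
      back i j (front (i + j) cs r.1) (fb 0) = fb) ↔
      (r = (fb (Fin.last j), fc 0) ∧ IsSplit cs i j k fa fb fc) := by
    rintro ⟨r₁, r₂⟩
    rw [front_front cs _ _ (by omega) hn, IsSplit]
    constructor
    · rintro ⟨h₁, h₂, h₃⟩
      obtain rfl := eq_zero_of_back_eq cs h₁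
      obtain rfl : r₁ = fb (Fin.last j) := by rw [← h₃, back_front_apply_last cs _ _ hj]
      exact ⟨rfl, h₂, h₃, h₁⟩
    · rintro ⟨h, h₂, h₃, h₁⟩
      obtain ⟨rfl, rfl⟩ := Prod.mk.inj h
      exact ⟨h₁, h₂, h₃⟩
  simp only [leftWeight, key, ite_and, Finsupp.sum_mul_ite_eq]
  rw [entry_front_of_lt cs _ (by omega) hn]
  split_ifs <;> ring

open Classical in
lemma rightWeight_of_pos {j : ℕ} (fb : Fin (j + 1) → C.ι) (hj : 0 < j) (hn : i + j + k ≤ n) :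
    rightWeight C cs (j + k) i j k fa fb fc = if IsSplit cs i j k fa fb fc then
      C.delta (entry cs i) (fa (Fin.last i), fb 0) *
        C.delta (entry cs (i + j)) (fb (Fin.last j), fc 0) else 0 := by
  have key : ∀ r : C.ι × C.ι, (front i cs r.1 = fa ∧
      front j (back i (j + k) cs r.2) (fb (Fin.last j)) = fb ∧
      back j k (back i (j + k) cs r.2) (fc 0) = fc) ↔
      (r = (fa (Fin.last i), fb 0) ∧ IsSplit cs i j k fa fb fc) := by
    rintro ⟨r₁, r₂⟩
    rw [← back_front cs (m := j + k) _ _ hj (by omega) (by omega),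
      back_back cs _ _ le_rfl hn, IsSplit]
    constructor
    · rintro ⟨h₁, h₂, h₃⟩
      obtain rfl := eq_last_of_front_eq cs h₁
      obtain rfl : r₂ = fb 0 := by rw [← h₂, back_apply_zero]
      exact ⟨rfl, h₁, h₂, h₃⟩
    · rintro ⟨h, h₁, h₂, h₃⟩
      obtain ⟨rfl, rfl⟩ := Prod.mk.inj h
      exact ⟨h₁, h₂, h₃⟩
  simp only [rightWeight, key, ite_and, Finsupp.sum_mul_ite_eq]
  rw [entry_back_of_pos cs _ hj (by omega) (by omega), mul_ite, mul_zero]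

open Classical in
lemma leftWeight_zero (fb : Fin (0 + 1) → C.ι) (hn : i ≤ n) :
    leftWeight C cs i k i 0 fa fb fc = if IsSplit cs i 0 k fa fb fc then
      (C.delta (entry cs i)).sum fun r t => t *
        if r.2 = fc 0 then C.delta r.1 (fa (Fin.last i), fb 0) else 0 else 0 := by
  have key : ∀ r : C.ι × C.ι, (back i k cs r.2 = fc ∧
      front i (front i cs r.1) (fa (Fin.last i)) = fa ∧ back i 0 (front i cs r.1) (fb 0) = fb) ↔
      (r.2 = fc 0 ∧ IsSplit cs i 0 k fa fb fc) := by
    rintro ⟨r₁, r₂⟩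
    rw [front_front cs _ _ le_rfl hn, back_zero, const_eq_of_fin_one, isSplit_zero_iff]
    constructor
    · rintro ⟨h₁, h₂, -⟩
      obtain rfl := eq_zero_of_back_eq cs h₁
      exact ⟨rfl, h₂, h₁⟩
    · rintro ⟨rfl, h₂, h₃⟩
      exact ⟨h₃, h₂, rfl⟩
  simp only [leftWeight, key, ite_and, entry_front_self]
  split_ifs <;> simp

open Classical in
lemma rightWeight_zero (fb : Fin (0 + 1) → C.ι) (hn : i + k ≤ n) :
    rightWeight C cs k i 0 k fa fb fc = if IsSplit cs i 0 k fa fb fc then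
      (C.delta (entry cs i)).sum fun r t => t *
        if r.1 = fa (Fin.last i) then C.delta r.2 (fb 0, fc 0) else 0 else 0 := by
  have key : ∀ r : C.ι × C.ι, (front i cs r.1 = fa ∧
      front 0 (back i k cs r.2) (fb (Fin.last 0)) = fb ∧
      back 0 k (back i k cs r.2) (fc 0) = fc) ↔
      (r.1 = fa (Fin.last i) ∧ IsSplit cs i 0 k fa fb fc) := by
    rintro ⟨r₁, r₂⟩
    rw [front_zero, const_eq_of_fin_one, back_back cs _ _ (by omega : 0 + k ≤ k) (by omega),
      isSplit_zero_iff]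
    constructor
    · rintro ⟨h₁, -, h₃⟩
      obtain rfl := eq_last_of_front_eq cs h₁
      exact ⟨rfl, h₁, h₃⟩
    · rintro ⟨rfl, h₁, h₃⟩
      exact ⟨h₁, rfl, h₃⟩
  simp only [rightWeight, key, ite_and, entry_back_zero]
  split_ifs <;> simp

end Weights

open Classical in
lemma leftWeight_eq_rightWeight (hC : IsCoassocCoeffs C.delta) {n i j k : ℕ}
    (cs : Fin (n + 1) → C.ι) (fa : Fin (i + 1) → C.ι) (fb : Fin (j + 1) → C.ι)
    (fc : Fin (k + 1) → C.ι) (hn : i + j + k = n) :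
    leftWeight C cs (i + j) k i j fa fb fc = rightWeight C cs (j + k) i j k fa fb fc := by
  obtain rfl | hj := Nat.eq_zero_or_pos j
  · rw [show i + 0 = i from rfl, Nat.zero_add, leftWeight_zero C cs fa fc fb (by omega),
      rightWeight_zero C cs fa fc fb (by omega), hC (entry cs i)]
  · rw [leftWeight_of_pos C cs fa fc fb hj (by omega), rightWeight_of_pos C cs fa fc fb hj hn.le]

def compTerm (e : compIdx D C) (q : D.ι × D.ι) (r : C.ι × C.ι) : compIdx D C × compIdx D C :=
  (⟨q.1, front (D.deg q.1) e.2 r.1⟩, ⟨q.2, back (D.deg q.1) (D.deg q.2) e.2 r.2⟩)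

noncomputable def compDelta (e : compIdx D C) : compIdx D C × compIdx D C →₀ K :=
  (D.delta e.1).sum fun q s => (C.delta (entry e.2 (D.deg q.1))).sum fun r t =>
    single (compTerm D C e q r) (s * t)

lemma compDelta_sum_smul {M : Type*} [AddCommMonoid M] [Module K M] (e : compIdx D C)
    (v : compIdx D C × compIdx D C → M) :
    ((compDelta D C e).sum fun p k => k • v p) =
      (D.delta e.1).sum fun q s => s • (C.delta (entry e.2 (D.deg q.1))).sum fun r t =>
        t • v (compTerm D C e q r) := by
  rw [← Finsupp.linearCombination_apply]
  simp only [compDelta, map_finsuppSum, linearCombination_single, Finsupp.smul_sum, mul_smul]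

lemma compComul_eq_coeffComul : compComul D C = coeffComul (compDelta D C) := by
  unfold compComul coeffComul
  congr 1
  funext e
  rw [compDelta_sum_smul]
  simp only [Finsupp.sum, Finset.smul_sum, smul_smul]
  rfl

lemma compTerm_eq_iff (d : D.ι) (cs : Fin (D.deg d + 1) → C.ι) (q : D.ι × D.ι)
    (r : C.ι × C.ι) (d₁ d₂ : D.ι) (f₁ : Fin (D.deg d₁ + 1) → C.ι) (f₂ : Fin (D.deg d₂ + 1) → C.ι) :
    compTerm D C ⟨d, cs⟩ q r = (⟨d₁, f₁⟩, ⟨d₂, f₂⟩) ↔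
      q = (d₁, d₂) ∧ r = (f₁ (Fin.last _), f₂ 0) ∧
        front (D.deg d₁) cs (f₁ (Fin.last _)) = f₁ ∧ back (D.deg d₁) (D.deg d₂) cs (f₂ 0) = f₂ := by
  obtain ⟨q₁, q₂⟩ := q
  obtain ⟨r₁, r₂⟩ := r
  refine (Prod.mk_inj (α := compIdx D C) (β := compIdx D C)).trans ?_
  refine (and_congr (Sigma.mk_apply_eq_mk_iff (fun x => front (D.deg x) cs r₁))
    (Sigma.mk_apply_eq_mk_iff (fun x => back (D.deg q₁) (D.deg x) cs r₂))).trans ?_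
  simp only [Prod.mk.injEq]
  constructor
  · rintro ⟨⟨rfl, h₁⟩, rfl, h₂⟩
    obtain rfl := eq_last_of_front_eq cs h₁
    obtain rfl := eq_zero_of_back_eq cs h₂
    exact ⟨⟨rfl, rfl⟩, ⟨rfl, rfl⟩, h₁, h₂⟩
  · rintro ⟨⟨rfl, rfl⟩, ⟨rfl, rfl⟩, h₁, h₂⟩
    exact ⟨⟨rfl, h₁⟩, rfl, h₂⟩

open Classical in
lemma compDelta_apply (d : D.ι) (cs : Fin (D.deg d + 1) → C.ι) (d₁ d₂ : D.ι)
    (f₁ : Fin (D.deg d₁ + 1) → C.ι) (f₂ : Fin (D.deg d₂ + 1) → C.ι) :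
    compDelta D C ⟨d, cs⟩ (⟨d₁, f₁⟩, ⟨d₂, f₂⟩) = D.delta d (d₁, d₂) *
      if front (D.deg d₁) cs (f₁ (Fin.last _)) = f₁ ∧ back (D.deg d₁) (D.deg d₂) cs (f₂ 0) = f₂
      then C.delta (entry cs (D.deg d₁)) (f₁ (Fin.last _), f₂ 0) else 0 := by
  set x : compIdx D C × compIdx D C := (⟨d₁, f₁⟩, ⟨d₂, f₂⟩)
  calc compDelta D C ⟨d, cs⟩ x
      = (compDelta D C ⟨d, cs⟩).sum fun p k => k • if p = x then (1 : K) else 0 := by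
        simp
    _ = (D.delta d).sum fun q s => s * if q = (d₁, d₂) then
          (C.delta (entry cs (D.deg d₁))).sum fun r t => t * if r = (f₁ (Fin.last _), f₂ 0) then
            if front (D.deg d₁) cs (f₁ (Fin.last _)) = f₁ ∧
              back (D.deg d₁) (D.deg d₂) cs (f₂ 0) = f₂ then 1 else 0 else 0 else 0 := by
        refine (compDelta_sum_smul D C _ _).trans (Finsupp.sum_congr fun q _ => ?_)
        simp only [x, compTerm_eq_iff, ite_and, smul_eq_mul]
        by_cases hq : q = (d₁, d₂)
        · subst hq
          simp only [if_true]
        · simp [hq]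
    _ = _ := by
        simp only [Finsupp.sum_mul_ite_eq]
        split_ifs <;> ring

/-- Stated at type `compIdx D C`: an anonymous-constructor equation elaborates at the underlying
`Sigma` type, which `simp` does not match against the equations produced by `compTerm`. -/
lemma compIdx_mk_inj {x : D.ι} {f g : Fin (D.deg x + 1) → C.ι} :
    @Eq (compIdx D C) ⟨x, f⟩ ⟨x, g⟩ ↔ f = g :=
  Sigma.mk.inj_iff.trans (and_iff_right_of_imp fun _ => rfl) |>.trans heq_iff_eq

open Classical in
lemma compDelta_coassoc_left (hD : ∀ b p, D.delta b p ≠ 0 → D.deg p.1 + D.deg p.2 = D.deg b)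
    (d : D.ι) (cs : Fin (D.deg d + 1) → C.ι) (da db dc : D.ι) (fa : Fin (D.deg da + 1) → C.ι)
    (fb : Fin (D.deg db + 1) → C.ι) (fc : Fin (D.deg dc + 1) → C.ι) :
    ((compDelta D C ⟨d, cs⟩).sum fun p k =>
        k * if p.2 = ⟨dc, fc⟩ then compDelta D C p.1 (⟨da, fa⟩, ⟨db, fb⟩) else 0) =
      (D.delta d).sum fun q s => s * (if q.2 = dc then D.delta q.1 (da, db) else 0) *
        leftWeight C cs (D.deg da + D.deg db) (D.deg dc) (D.deg da) (D.deg db) fa fb fc := by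
  have h := compDelta_sum_smul D C ⟨d, cs⟩ fun p =>
    if p.2 = ⟨dc, fc⟩ then compDelta D C p.1 (⟨da, fa⟩, ⟨db, fb⟩) else 0
  simp only [smul_eq_mul] at h
  refine h.trans (Finsupp.sum_congr fun ⟨m, m₂⟩ _ => ?_)
  simp only [compTerm]
  by_cases hm₂ : m₂ = dc
  swap
  · have hne : ∀ r : C.ι × C.ι,
        ¬@Eq (compIdx D C) ⟨m₂, back (D.deg m) (D.deg m₂) cs r.2⟩ ⟨dc, fc⟩ :=
      fun r h => hm₂ (congrArg Sigma.fst h)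
    simp [hne, hm₂]
  subst hm₂
  simp only [compIdx_mk_inj, compDelta_apply, if_true]
  by_cases hδ : D.delta m (da, db) = 0
  · simp [hδ]
  rw [show D.deg da + D.deg db = D.deg m from hD m (da, db) hδ, leftWeight, Finsupp.mul_sum,
    Finsupp.mul_sum]
  refine Finsupp.sum_congr fun r _ => ?_
  simp only [ite_and]
  split_ifs <;> ring

open Classical in
lemma compDelta_coassoc_right (hD : ∀ b p, D.delta b p ≠ 0 → D.deg p.1 + D.deg p.2 = D.deg b)
    (d : D.ι) (cs : Fin (D.deg d + 1) → C.ι) (da db dc : D.ι) (fa : Fin (D.deg da + 1) → C.ι)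
    (fb : Fin (D.deg db + 1) → C.ι) (fc : Fin (D.deg dc + 1) → C.ι) :
    ((compDelta D C ⟨d, cs⟩).sum fun p k =>
        k * if p.1 = ⟨da, fa⟩ then compDelta D C p.2 (⟨db, fb⟩, ⟨dc, fc⟩) else 0) =
      (D.delta d).sum fun q s => s * (if q.1 = da then D.delta q.2 (db, dc) else 0) *
        rightWeight C cs (D.deg db + D.deg dc) (D.deg da) (D.deg db) (D.deg dc) fa fb fc := by
  have h := compDelta_sum_smul D C ⟨d, cs⟩ fun p =>
    if p.1 = ⟨da, fa⟩ then compDelta D C p.2 (⟨db, fb⟩, ⟨dc, fc⟩) else 0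
  simp only [smul_eq_mul] at h
  refine h.trans (Finsupp.sum_congr fun ⟨m₁, m⟩ _ => ?_)
  simp only [compTerm]
  by_cases hm₁ : m₁ = da
  swap
  · have hne : ∀ r : C.ι × C.ι,
        ¬@Eq (compIdx D C) ⟨m₁, front (D.deg m₁) cs r.1⟩ ⟨da, fa⟩ :=
      fun r h => hm₁ (congrArg Sigma.fst h)
    simp [hne, hm₁]
  subst hm₁
  simp only [compIdx_mk_inj, compDelta_apply, if_true]
  by_cases hδ : D.delta m (db, dc) = 0
  · simp [hδ]
  rw [show D.deg db + D.deg dc = D.deg m from hD m (db, dc) hδ, rightWeight, Finsupp.mul_sum,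
    Finsupp.mul_sum]
  refine Finsupp.sum_congr fun r _ => ?_
  simp only [ite_and]
  split_ifs <;> ring

open Classical in
lemma sum_delta_mul_delta_eq_zero_of_deg_ne
    (hD : ∀ b p, D.delta b p ≠ 0 → D.deg p.1 + D.deg p.2 = D.deg b) {d da db dc : D.ι}
    (hn : D.deg da + D.deg db + D.deg dc ≠ D.deg d) :
    ((D.delta d).sum fun q s => s * if q.2 = dc then D.delta q.1 (da, db) else 0) = 0 := by
  refine Finset.sum_eq_zero fun ⟨m, m₂⟩ hq => ?_
  by_cases hm₂ : m₂ = dc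
  · subst hm₂
    by_cases hδ : D.delta m (da, db) = 0
    · simp [hδ]
    have h₁ := hD d (m, m₂) (Finsupp.mem_support_iff.1 hq)
    have h₂ := hD m (da, db) hδ
    dsimp only at h₁ h₂
    omega
  · simp [hm₂]

end BasedGradedCoalgebra

/-- for graded coalgebras `C` and `D`, the compositional coproduct on
`D ∘ C = ⊕_{n≥0} D_n ⊗ C^{⊗(n+1)}` is coassociative. -/
theorem stmt_4 (K : Type) [Field K] (C D : BasedGradedCoalgebra K)
    (hC : C.IsCoalgebra) (hD : D.IsCoalgebra) :
    ∀ x : compIdx D C →₀ K,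
      (TensorProduct.assoc K (compIdx D C →₀ K) (compIdx D C →₀ K) (compIdx D C →₀ K))
          ((TensorProduct.map (compComul D C) LinearMap.id) (compComul D C x)) =
        (TensorProduct.map LinearMap.id (compComul D C)) (compComul D C x) := by
  classical
  have hCδ := (coeffComul_coassoc_iff C.delta).1 hC.1
  have hDδ := (coeffComul_coassoc_iff D.delta).1 hD.1
  rw [compComul_eq_coeffComul]
  refine (coeffComul_coassoc_iff _).2 fun ⟨d, cs⟩ ⟨da, fa⟩ ⟨db, fb⟩ ⟨dc, fc⟩ => ?_
  rw [compDelta_coassoc_left D C hD.2.2.2.1, compDelta_coassoc_right D C hD.2.2.2.1,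
    ← Finsupp.sum_mul, ← Finsupp.sum_mul, ← hDδ]
  by_cases hn : D.deg da + D.deg db + D.deg dc = D.deg d
  · rw [leftWeight_eq_rightWeight C hCδ cs fa fb fc hn]
  · rw [sum_delta_mul_delta_eq_zero_of_deg_ne D hD.2.2.2.1 hn, zero_mul, zero_mul]
end

section
/- If E is a connection on a connected graded Hopf algebra D via f: E → D, then the map ρ := (1⊗f)∘Δ_E : E → E⊗D makes E a right D-comodule, and together with the D-action makes E a Hopf module over D. -/
open TensorProduct

/-- The componentwise action of `D ⊗ D` on `E ⊗ E` induced by a bilinear action. -/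
noncomputable def tensorAct (K E D : Type*) [Field K]
    [AddCommGroup E] [Module K E] [AddCommGroup D] [Module K D]
    (star : E →ₗ[K] D →ₗ[K] E) :
    (E ⊗[K] E) ⊗[K] (D ⊗[K] D) →ₗ[K] E ⊗[K] E :=
  TensorProduct.map (TensorProduct.lift star) (TensorProduct.lift star) ∘ₗ
    (TensorProduct.tensorTensorTensorComm K E E D D).toLinearMap

/-- The "Hopf module" mixed operation of `D ⊗ D` on `E ⊗ D`: the first factor acts on
`E` via `⋆` and the second multiplies in `D`: `(e ⊗ a) · (d ⊗ d') = (e ⋆ d) ⊗ (a d')`. -/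
noncomputable def mixAct (K E D : Type*) [Field K]
    [AddCommGroup E] [Module K E] [Ring D] [Algebra K D]
    (star : E →ₗ[K] D →ₗ[K] E) :
    (E ⊗[K] D) ⊗[K] (D ⊗[K] D) →ₗ[K] E ⊗[K] D :=
  TensorProduct.map (TensorProduct.lift star) (LinearMap.mul' K D) ∘ₗ
    (TensorProduct.tensorTensorTensorComm K E D D D).toLinearMap

/-- if `E` is a connection on a connected graded Hopf algebra `D` via
`f : E → D`, then `ρ := (1 ⊗ f) ∘ Δ_E : E → E ⊗ D` makes `E` a right `D`-comodule,
and together with the `D`-action a Hopf module over `D`: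
`ρ(e ⋆ d) = ρ(e) · Δ_D(d)`. -/
theorem stmt_9 (K D E : Type*) [Field K] [Ring D] [HopfAlgebra K D]
    [AddCommGroup E] [Module K E] [Coalgebra K E]
    (ℬ : ℕ → Submodule K D) [GradedAlgebra ℬ]
    (hconnD : ℬ 0 = (1 : Submodule K D))
    (ℰ : ℕ → Submodule K E) [DirectSum.Decomposition ℰ]
    (hconnE : Module.finrank K (ℰ 0) = 1)
    -- E is an associative unital right D-module
    (star : E →ₗ[K] D →ₗ[K] E)
    (hassoc : ∀ (e : E) (d d' : D), star (star e d) d' = star e (d * d'))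
    (hunit : ∀ e : E, star e 1 = e)
    -- the action commutes with the coproducts
    (hmodcoalg : ∀ (e : E) (d : D),
      Coalgebra.comul (R := K) (star e d) =
        tensorAct K E D star (Coalgebra.comul e ⊗ₜ[K] Coalgebra.comul d))
    (hmodcounit : ∀ (e : E) (d : D),
      Coalgebra.counit (R := K) (star e d) =
        Coalgebra.counit (R := K) e * Coalgebra.counit (R := K) d)
    -- f is a coalgebra map and a module map
    (f : E →ₗ[K] D)
    (hfcoalg : TensorProduct.map f f ∘ₗ Coalgebra.comul = Coalgebra.comul ∘ₗ f)
    (hfcounit : Coalgebra.counit ∘ₗ f = (Coalgebra.counit : E →ₗ[K] K))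
    (hfmod : ∀ (e : E) (d : D), f (star e d) = f e * d) :
    -- ρ := (1 ⊗ f) ∘ Δ_E
    let ρ : E →ₗ[K] E ⊗[K] D := TensorProduct.map LinearMap.id f ∘ₗ Coalgebra.comul
    -- counit axiom of the coaction
    (∀ e : E, (TensorProduct.rid K E)
        ((TensorProduct.map LinearMap.id (Coalgebra.counit (R := K))) (ρ e)) = e) ∧
    -- coassociativity of the coaction
    (∀ e : E, (TensorProduct.assoc K E D D)
        ((TensorProduct.map ρ LinearMap.id) (ρ e)) =
      (TensorProduct.map LinearMap.id (Coalgebra.comul (R := K))) (ρ e)) ∧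
    -- Hopf module compatibility: ρ(e ⋆ d) = ρ(e) · Δ_D(d)
    (∀ (e : E) (d : D),
      ρ (star e d) = mixAct K E D star (ρ e ⊗ₜ[K] Coalgebra.comul d)) := by
  intro ρ
  refine ⟨?_, ?_, ?_⟩
  · intro e
    have h1 : (TensorProduct.map (LinearMap.id (M := E)) (Coalgebra.counit (R := K))) ∘ₗ
        (TensorProduct.map LinearMap.id f) =
        TensorProduct.map LinearMap.id (Coalgebra.counit (R := K) ∘ₗ f) := by
      rw [← TensorProduct.map_comp]; rfl
    have := LinearMap.congr_fun h1 (Coalgebra.comul (R := K) e)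
    simp only [ρ, LinearMap.comp_apply] at this ⊢
    rw [this, hfcounit]
    have := Coalgebra.lTensor_counit_comul (R := K) e
    rw [LinearMap.lTensor] at this
    rw [this]
    simp
  · intro e
    simp only [ρ, LinearMap.comp_apply]
    have h1 : TensorProduct.map (TensorProduct.map (LinearMap.id (M := E)) f ∘ₗ
          Coalgebra.comul) LinearMap.id ∘ₗ TensorProduct.map LinearMap.id f =
        TensorProduct.map (TensorProduct.map LinearMap.id f) f ∘ₗ
          TensorProduct.map (Coalgebra.comul (R := K)) LinearMap.id := by
      rw [← TensorProduct.map_comp, ← TensorProduct.map_comp]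
      simp
    rw [← LinearMap.comp_apply, LinearMap.congr_fun h1 (Coalgebra.comul (R := K) e),
      LinearMap.comp_apply, ← TensorProduct.map_map_assoc]
    have hco : TensorProduct.map (Coalgebra.comul (R := K)) LinearMap.id = 
        (Coalgebra.comul (R := K) (A := E)).rTensor E := rfl
    rw [hco]
    have := Coalgebra.coassoc_apply (R := K) e
    rw [this]
    rw [LinearMap.lTensor]
    rw [← LinearMap.comp_apply, ← TensorProduct.map_comp]
    rw [← LinearMap.comp_apply (TensorProduct.map _ _) (TensorProduct.map _ _),
      ← TensorProduct.map_comp]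
    rw [hfcoalg]
  · intro e d
    simp only [ρ, LinearMap.comp_apply]
    rw [hmodcoalg]
    generalize Coalgebra.comul (R := K) e = x
    generalize Coalgebra.comul (R := K) d = y
    induction x using TensorProduct.induction_on with
    | zero => simp [tensorAct, mixAct]
    | add a b ha hb =>
        simp only [TensorProduct.add_tmul, map_add, ha, hb]
    | tmul e1 e2 =>
        induction y using TensorProduct.induction_on with
        | zero => simp [tensorAct, mixAct]
        | add a b ha hb =>
            simp only [TensorProduct.tmul_add, map_add, ha, hb]
        | tmul d1 d2 =>
            simp [tensorAct, mixAct, hfmod, TensorProduct.tensorTensorTensorComm_tmul]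
end
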